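/- arXiv:1705.03038 — 2 statements merged into one kernel-verified Lean document; each statement's English description precedes it below -/
import Mathlib

section
/- Let (λ, u) be an exact eigenpair of A and let i ∈ {1,…,m} be such that δ_i := min_{j≠i, 1≤j≤m} |μ̃_j − μ| > 0, where μ = 1/λ. Let E_m^{(i)} be the A-orthogonal projection onto span{ũ_i}. Then ‖u − E_m^{(i)} u‖_A ≤ √(1 + (μ̃_1/δ_i²) η_K²) · ‖(I − P_K) u‖_A. -/
open Matrix

/-- The Euclidean (`L²`) norm on `ℝⁿ`: `‖x‖₂ = √(xᵀx)`. -/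
noncomputable def l2N {n : ℕ} (x : Fin n → ℝ) : ℝ := Real.sqrt (x ⬝ᵥ x)

/-- The energy norm induced by the matrix `A`: `‖x‖_A = √(xᵀAx)`. -/
noncomputable def aN {n : ℕ} (A : Matrix (Fin n) (Fin n) ℝ) (x : Fin n → ℝ) : ℝ :=
  Real.sqrt (x ⬝ᵥ (A *ᵥ x))

/-- `η_K = sup_{‖g‖₂ = 1} ‖(I - P_K) A⁻¹ g‖_A`, where `P` is the `A`-orthogonal
projection onto the subspace `K`. -/
noncomputable def etaK {n : ℕ} (A : Matrix (Fin n) (Fin n) ℝ)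
    (P : (Fin n → ℝ) →ₗ[ℝ] (Fin n → ℝ)) : ℝ :=
  sSup ((fun g => aN A ((A⁻¹ *ᵥ g) - P (A⁻¹ *ᵥ g))) '' {g | l2N g = 1})

/-!
Write `e = u - P u` and `w = P u - E u ∈ K`. Galerkin orthogonality splits
`‖u - E u‖_A² = ‖e‖_A² + ‖w‖_A²`. In the `A`-orthonormal Ritz basis of `K`, `w` has the
coefficients `(u, ũ_j)_A` for `j ≠ i` and `0` for `j = i`, while `z = P A⁻¹ e` has the
coefficients `ũ_jᵀ e = (μ - μ̃_j) (u, ũ_j)_A`; hence `δ_i² ‖w‖_A² ≤ ‖z‖_A² = eᵀz`.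
Finally `eᵀz = ((I - P) A⁻¹ z, e)_A ≤ η_K ‖z‖₂ ‖e‖_A` by Cauchy–Schwarz, and the Rayleigh
quotient bound `‖z‖₂² ≤ μ̃_1 ‖z‖_A² = μ̃_1 eᵀz` on `K` turns this into `eᵀz ≤ μ̃_1 η_K² ‖e‖_A²`.
-/

namespace Matrix

variable {ι : Type*}

theorem PosSemidef.isSymm {A : Matrix ι ι ℝ} (hA : A.PosSemidef) : A.IsSymm :=
  isHermitian_iff_isSymm.mp hA.isHermitian

variable [Fintype ι]

theorem IsSymm.dotProduct_mulVec_comm {α : Type*} [CommSemiring α] {A : Matrix ι ι α}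
    (hA : A.IsSymm) (x y : ι → α) : x ⬝ᵥ (A *ᵥ y) = y ⬝ᵥ (A *ᵥ x) := by
  rw [dotProduct_mulVec, ← mulVec_transpose, hA.eq, dotProduct_comm]

theorem PosSemidef.dotProduct_mulVec_self_nonneg {A : Matrix ι ι ℝ} (hA : A.PosSemidef)
    (x : ι → ℝ) : 0 ≤ x ⬝ᵥ (A *ᵥ x) := by
  simpa using hA.dotProduct_mulVec_nonneg x

theorem PosSemidef.dotProduct_mulVec_sq_le {A : Matrix ι ι ℝ} (hA : A.PosSemidef)
    (x y : ι → ℝ) : (x ⬝ᵥ (A *ᵥ y)) ^ 2 ≤ (x ⬝ᵥ (A *ᵥ x)) * (y ⬝ᵥ (A *ᵥ y)) := by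
  classical
  have h := LinearMap.BilinForm.apply_mul_apply_le_of_forall_zero_le (toLinearMap₂' ℝ A)
    (fun z ↦ by simpa only [toLinearMap₂'_apply'] using hA.dotProduct_mulVec_self_nonneg z) x y
  simp only [toLinearMap₂'_apply'] at h
  rwa [hA.isSymm.dotProduct_mulVec_comm y x, ← sq] at h

theorem mulVec_nonsing_inv_mulVec {α : Type*} [DecidableEq ι] [CommRing α] {A : Matrix ι ι α}
    (hA : IsUnit A) (x : ι → α) : A *ᵥ (A⁻¹ *ᵥ x) = x := by
  rw [mulVec_mulVec, mul_nonsing_inv A ((isUnit_iff_isUnit_det A).mp hA), one_mulVec]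

theorem PosDef.pos_of_mulVec_eq_smul {A : Matrix ι ι ℝ} (hA : A.PosDef) {lam : ℝ} {u : ι → ℝ}
    (hu : u ≠ 0) (heig : A *ᵥ u = lam • u) : 0 < lam := by
  have h := hA.dotProduct_mulVec_pos hu
  rw [heig, star_trivial, dotProduct_smul, smul_eq_mul] at h
  exact pos_of_mul_pos_left h (dotProduct_self_star_nonneg u)

end Matrix

open Matrix

section EnergyNorm

variable {n : ℕ} {A : Matrix (Fin n) (Fin n) ℝ}

theorem aN_nonneg (x : Fin n → ℝ) : 0 ≤ aN A x :=
  Real.sqrt_nonneg _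

theorem aN_sq (hA : A.PosSemidef) (x : Fin n → ℝ) : aN A x ^ 2 = x ⬝ᵥ (A *ᵥ x) :=
  Real.sq_sqrt (hA.dotProduct_mulVec_self_nonneg x)

theorem aN_smul (c : ℝ) (x : Fin n → ℝ) : aN A (c • x) = |c| * aN A x := by
  rw [aN, aN, mulVec_smul, smul_dotProduct, dotProduct_smul, smul_eq_mul, smul_eq_mul,
    ← mul_assoc, ← abs_mul_abs_self, Real.sqrt_mul (mul_self_nonneg |c|),
    Real.sqrt_mul_self (abs_nonneg c)]

theorem continuous_aN : Continuous (aN A) := by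
  unfold aN
  simp only [mulVec, dotProduct]
  fun_prop

theorem aN_add_sq_of_orthogonal (hA : A.PosSemidef) {x y : Fin n → ℝ}
    (hxy : x ⬝ᵥ (A *ᵥ y) = 0) : aN A (x + y) ^ 2 = aN A x ^ 2 + aN A y ^ 2 := by
  rw [aN_sq hA, aN_sq hA, aN_sq hA, mulVec_add, dotProduct_add, add_dotProduct, add_dotProduct,
    hA.isSymm.dotProduct_mulVec_comm y x, hxy]
  ring

theorem l2N_eq_norm (x : Fin n → ℝ) : l2N x = ‖WithLp.toLp 2 x‖ := by
  simp [l2N, EuclideanSpace.norm_eq, dotProduct, ← sq]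

theorem l2N_sq (x : Fin n → ℝ) : l2N x ^ 2 = x ⬝ᵥ x :=
  Real.sq_sqrt (by simpa using dotProduct_self_star_nonneg x)

theorem isCompact_setOf_l2N_eq_one : IsCompact {g : Fin n → ℝ | l2N g = 1} := by
  convert (isCompact_sphere (0 : EuclideanSpace ℝ (Fin n)) 1).image (PiLp.continuous_ofLp 2 _)
  ext g
  simp only [Set.mem_image, mem_sphere_iff_norm, sub_zero, l2N_eq_norm]
  exact ⟨fun h ↦ ⟨WithLp.toLp 2 g, h, rfl⟩, by rintro ⟨y, hy, rfl⟩; simpa using hy⟩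

theorem aN_sub_le_etaK_mul_l2N (P : (Fin n → ℝ) →ₗ[ℝ] (Fin n → ℝ)) (z : Fin n → ℝ) :
    aN A (A⁻¹ *ᵥ z - P (A⁻¹ *ᵥ z)) ≤ etaK A P * l2N z := by
  set T : (Fin n → ℝ) →ₗ[ℝ] (Fin n → ℝ) := (LinearMap.id - P) ∘ₗ (mulVecLin A⁻¹)
  have hT (g : Fin n → ℝ) : T g = A⁻¹ *ᵥ g - P (A⁻¹ *ᵥ g) := rfl
  obtain rfl | hz := eq_or_ne z 0
  · simp [aN, l2N]
  have hpos : 0 < l2N z := by simpa [l2N_eq_norm] using hz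
  have hbdd : BddAbove ((fun g ↦ aN A (T g)) '' {g | l2N g = 1}) :=
    (isCompact_setOf_l2N_eq_one.image
      (continuous_aN.comp T.continuous_of_finiteDimensional)).bddAbove
  have hunit : l2N ((l2N z)⁻¹ • z) = 1 := by
    rw [l2N_eq_norm, WithLp.toLp_smul, norm_smul, ← l2N_eq_norm, norm_inv,
      Real.norm_of_nonneg hpos.le, inv_mul_cancel₀ hpos.ne']
  have hle : aN A (T ((l2N z)⁻¹ • z)) ≤ etaK A P := le_csSup hbdd ⟨_, hunit, rfl⟩
  rw [map_smul, aN_smul, abs_inv, abs_of_pos hpos, inv_mul_le_iff₀ hpos] at hle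
  simpa only [hT, mul_comm] using hle

end EnergyNorm

section Galerkin

variable {n : ℕ} {A : Matrix (Fin n) (Fin n) ℝ} {K : Submodule ℝ (Fin n → ℝ)}
  {P : (Fin n → ℝ) →ₗ[ℝ] (Fin n → ℝ)}

theorem galerkin_inv_energy_eq (hA : A.PosDef) (hPmem : ∀ x, P x ∈ K)
    (hPproj : ∀ x, ∀ y ∈ K, (P x) ⬝ᵥ (A *ᵥ y) = x ⬝ᵥ (A *ᵥ y)) (e : Fin n → ℝ) :
    P (A⁻¹ *ᵥ e) ⬝ᵥ (A *ᵥ P (A⁻¹ *ᵥ e)) = e ⬝ᵥ P (A⁻¹ *ᵥ e) := by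
  rw [hPproj _ _ (hPmem _), hA.posSemidef.isSymm.dotProduct_mulVec_comm,
    mulVec_nonsing_inv_mulVec hA.isUnit, dotProduct_comm]

theorem dotProduct_galerkin_inv_le (hA : A.PosDef) (hPmem : ∀ x, P x ∈ K)
    (hPproj : ∀ x, ∀ y ∈ K, (P x) ⬝ᵥ (A *ᵥ y) = x ⬝ᵥ (A *ᵥ y)) {M : ℝ} (hM0 : 0 ≤ M)
    (hM : ∀ y ∈ K, y ⬝ᵥ y ≤ M * (y ⬝ᵥ (A *ᵥ y))) {e : Fin n → ℝ}
    (he : ∀ y ∈ K, e ⬝ᵥ (A *ᵥ y) = 0) :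
    e ⬝ᵥ P (A⁻¹ *ᵥ e) ≤ M * etaK A P ^ 2 * aN A e ^ 2 := by
  have hsymm := hA.posSemidef.isSymm
  set z := P (A⁻¹ *ᵥ e)
  set s := A⁻¹ *ᵥ z - P (A⁻¹ *ᵥ z)
  have hz : z ⬝ᵥ (A *ᵥ z) = e ⬝ᵥ z := galerkin_inv_energy_eq hA hPmem hPproj e
  have hz0 : 0 ≤ e ⬝ᵥ z := hz ▸ hA.posSemidef.dotProduct_mulVec_self_nonneg z
  have hse : s ⬝ᵥ (A *ᵥ e) = e ⬝ᵥ z := by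
    rw [sub_dotProduct, hsymm.dotProduct_mulVec_comm (P _), he _ (hPmem _), sub_zero,
      hsymm.dotProduct_mulVec_comm, mulVec_nonsing_inv_mulVec hA.isUnit]
  have hs : s ⬝ᵥ (A *ᵥ s) ≤ etaK A P ^ 2 * (M * (e ⬝ᵥ z)) := by
    have h := pow_le_pow_left₀ (aN_nonneg _) (aN_sub_le_etaK_mul_l2N (A := A) P z) 2
    rw [aN_sq hA.posSemidef, mul_pow, l2N_sq] at h
    exact h.trans (mul_le_mul_of_nonneg_left (hz ▸ hM z (hPmem _)) (sq_nonneg _))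
  have hcs : (e ⬝ᵥ z) ^ 2 ≤ (M * etaK A P ^ 2 * aN A e ^ 2) * (e ⬝ᵥ z) := by
    calc (e ⬝ᵥ z) ^ 2 = (s ⬝ᵥ (A *ᵥ e)) ^ 2 := by rw [hse]
      _ ≤ (s ⬝ᵥ (A *ᵥ s)) * (e ⬝ᵥ (A *ᵥ e)) := hA.posSemidef.dotProduct_mulVec_sq_le s e
      _ ≤ etaK A P ^ 2 * (M * (e ⬝ᵥ z)) * (e ⬝ᵥ (A *ᵥ e)) :=
        mul_le_mul_of_nonneg_right hs (hA.posSemidef.dotProduct_mulVec_self_nonneg e)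
      _ = (M * etaK A P ^ 2 * aN A e ^ 2) * (e ⬝ᵥ z) := by rw [aN_sq hA.posSemidef]; ring
  rcases hz0.eq_or_lt with h0 | hpos
  · rw [← h0]
    positivity
  · rw [sq] at hcs
    exact le_of_mul_le_mul_right hcs hpos

end Galerkin

section RitzBasis

variable {n m : ℕ} {A : Matrix (Fin n) (Fin n) ℝ} {K : Submodule ℝ (Fin n → ℝ)}
  {tu : Fin m → Fin n → ℝ}

theorem sum_smul_dotProduct_mulVec_of_orthonormal
    (htortho : ∀ i j, tu i ⬝ᵥ (A *ᵥ tu j) = if i = j then (1 : ℝ) else 0)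
    (a : Fin m → ℝ) (k : Fin m) : (∑ j, a j • tu j) ⬝ᵥ (A *ᵥ tu k) = a k := by
  simp [sum_dotProduct, smul_dotProduct, htortho]

theorem sum_dotProduct_mulVec_smul_eq_of_mem (hK : Module.finrank ℝ K = m)
    (htu : ∀ j, tu j ∈ K)
    (htortho : ∀ i j, tu i ⬝ᵥ (A *ᵥ tu j) = if i = j then (1 : ℝ) else 0)
    {y : Fin n → ℝ} (hy : y ∈ K) : ∑ j, (y ⬝ᵥ (A *ᵥ tu j)) • tu j = y := by
  have hli : LinearIndependent ℝ tu := by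
    refine Fintype.linearIndependent_iff.mpr fun a ha k ↦ ?_
    rw [← sum_smul_dotProduct_mulVec_of_orthonormal htortho a k, ha, zero_dotProduct]
  have hspan : Submodule.span ℝ (Set.range tu) = K :=
    Submodule.eq_of_le_of_finrank_eq (Submodule.span_le.mpr (Set.range_subset_iff.mpr htu))
      (by rw [finrank_span_eq_card hli, Fintype.card_fin, hK])
  obtain ⟨a, rfl⟩ := Submodule.mem_span_range_iff_exists_fun ℝ |>.mp (hspan ▸ hy)
  simp_rw [sum_smul_dotProduct_mulVec_of_orthonormal htortho]

theorem dotProduct_mulVec_self_eq_sum_sq (hA : A.IsSymm) (hK : Module.finrank ℝ K = m)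
    (htu : ∀ j, tu j ∈ K)
    (htortho : ∀ i j, tu i ⬝ᵥ (A *ᵥ tu j) = if i = j then (1 : ℝ) else 0)
    {y : Fin n → ℝ} (hy : y ∈ K) : y ⬝ᵥ (A *ᵥ y) = ∑ j, (y ⬝ᵥ (A *ᵥ tu j)) ^ 2 := by
  nth_rw 1 [← sum_dotProduct_mulVec_smul_eq_of_mem hK htu htortho hy]
  rw [sum_dotProduct]
  refine Finset.sum_congr rfl fun j _ ↦ ?_
  rw [smul_dotProduct, hA.dotProduct_mulVec_comm, smul_eq_mul, sq]

variable {tlam : Fin m → ℝ}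

theorem ritz_mul_dotProduct_eq
    (hRitz : ∀ j, ∀ v ∈ K, ((A *ᵥ tu j) - tlam j • tu j) ⬝ᵥ v = 0)
    (j : Fin m) {v : Fin n → ℝ} (hv : v ∈ K) : tlam j * (tu j ⬝ᵥ v) = v ⬝ᵥ (A *ᵥ tu j) := by
  have h := hRitz j v hv
  rwa [sub_dotProduct, smul_dotProduct, smul_eq_mul, sub_eq_zero, dotProduct_comm, eq_comm] at h

theorem ritz_pos (htu : ∀ j, tu j ∈ K)
    (hRitz : ∀ j, ∀ v ∈ K, ((A *ᵥ tu j) - tlam j • tu j) ⬝ᵥ v = 0)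
    (htortho : ∀ i j, tu i ⬝ᵥ (A *ᵥ tu j) = if i = j then (1 : ℝ) else 0) (j : Fin m) :
    0 < tlam j := by
  have h := ritz_mul_dotProduct_eq hRitz j (htu j)
  rw [htortho, if_pos rfl] at h
  exact pos_of_mul_pos_left (h ▸ one_pos) (by simpa using dotProduct_self_star_nonneg (tu j))

theorem dotProduct_self_le_of_mem (hA : A.IsSymm) (hK : Module.finrank ℝ K = m)
    (htu : ∀ j, tu j ∈ K)
    (hRitz : ∀ j, ∀ v ∈ K, ((A *ᵥ tu j) - tlam j • tu j) ⬝ᵥ v = 0)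
    (htortho : ∀ i j, tu i ⬝ᵥ (A *ᵥ tu j) = if i = j then (1 : ℝ) else 0)
    {j₀ : Fin m} (hj₀ : ∀ j, tlam j₀ ≤ tlam j) {y : Fin n → ℝ} (hy : y ∈ K) :
    y ⬝ᵥ y ≤ 1 / tlam j₀ * (y ⬝ᵥ (A *ᵥ y)) := by
  have hpos := ritz_pos htu hRitz htortho
  have hcoord (j : Fin m) : tu j ⬝ᵥ y = (y ⬝ᵥ (A *ᵥ tu j)) / tlam j := by
    rw [← ritz_mul_dotProduct_eq hRitz j hy, mul_div_cancel_left₀ _ (hpos j).ne']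
  nth_rw 1 [← sum_dotProduct_mulVec_smul_eq_of_mem hK htu htortho hy]
  rw [dotProduct_mulVec_self_eq_sum_sq hA hK htu htortho hy, Finset.mul_sum]
  simp only [sum_dotProduct, smul_dotProduct, smul_eq_mul, hcoord]
  refine Finset.sum_le_sum fun j _ ↦ ?_
  rw [← mul_div_assoc, ← sq, div_eq_mul_one_div, mul_comm]
  exact mul_le_mul_of_nonneg_right (one_div_le_one_div_of_le (hpos j₀) (hj₀ j)) (sq_nonneg _)

end RitzBasis

theorem apply_eq_dotProduct_mulVec_smul {n : ℕ} {A : Matrix (Fin n) (Fin n) ℝ}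
    {E : (Fin n → ℝ) → Fin n → ℝ} {v : Fin n → ℝ}
    (hEmem : ∀ x, E x ∈ Submodule.span ℝ {v})
    (hEproj : ∀ x, ∀ y ∈ Submodule.span ℝ {v}, (E x) ⬝ᵥ (A *ᵥ y) = x ⬝ᵥ (A *ᵥ y))
    (hv : v ⬝ᵥ (A *ᵥ v) = 1) (x : Fin n → ℝ) : E x = (x ⬝ᵥ (A *ᵥ v)) • v := by
  obtain ⟨β, hβ⟩ := Submodule.mem_span_singleton.mp (hEmem x)
  have h := hEproj x v (Submodule.mem_span_singleton_self v)
  rw [← hβ, smul_dotProduct, hv, smul_eq_mul, mul_one] at h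
  rw [← hβ, h]

section SpectralGap

variable {n m : ℕ} {A : Matrix (Fin n) (Fin n) ℝ} {K : Submodule ℝ (Fin n → ℝ)}
  {P : (Fin n → ℝ) →ₗ[ℝ] (Fin n → ℝ)} {tlam : Fin m → ℝ} {tu : Fin m → Fin n → ℝ}
  {lam : ℝ} {u : Fin n → ℝ}

theorem ritz_dotProduct_sub_galerkin (hA : A.IsSymm) (hPmem : ∀ x, P x ∈ K)
    (hPproj : ∀ x, ∀ y ∈ K, (P x) ⬝ᵥ (A *ᵥ y) = x ⬝ᵥ (A *ᵥ y)) (htu : ∀ j, tu j ∈ K)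
    (hRitz : ∀ j, ∀ v ∈ K, ((A *ᵥ tu j) - tlam j • tu j) ⬝ᵥ v = 0)
    (htortho : ∀ i j, tu i ⬝ᵥ (A *ᵥ tu j) = if i = j then (1 : ℝ) else 0)
    (heig : A *ᵥ u = lam • u) (hlam : lam ≠ 0) (j : Fin m) :
    tu j ⬝ᵥ (u - P u) = (1 / lam - 1 / tlam j) * (u ⬝ᵥ (A *ᵥ tu j)) := by
  have hu : tu j ⬝ᵥ u = (u ⬝ᵥ (A *ᵥ tu j)) / lam := by
    rw [hA.dotProduct_mulVec_comm, heig, dotProduct_smul, smul_eq_mul,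
      mul_div_cancel_left₀ _ hlam]
  have hPu : tu j ⬝ᵥ P u = (u ⬝ᵥ (A *ᵥ tu j)) / tlam j := by
    rw [← hPproj u _ (htu j), ← ritz_mul_dotProduct_eq hRitz j (hPmem u),
      mul_div_cancel_left₀ _ (ritz_pos htu hRitz htortho j).ne']
  rw [dotProduct_sub, hu, hPu]
  ring

theorem sq_mul_aN_sq_le_of_gap (hA : A.PosDef) (hK : Module.finrank ℝ K = m)
    (hPmem : ∀ x, P x ∈ K) (hPproj : ∀ x, ∀ y ∈ K, (P x) ⬝ᵥ (A *ᵥ y) = x ⬝ᵥ (A *ᵥ y))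
    (htu : ∀ j, tu j ∈ K) (hRitz : ∀ j, ∀ v ∈ K, ((A *ᵥ tu j) - tlam j • tu j) ⬝ᵥ v = 0)
    (htortho : ∀ i j, tu i ⬝ᵥ (A *ᵥ tu j) = if i = j then (1 : ℝ) else 0)
    (heig : A *ᵥ u = lam • u) (hlam : lam ≠ 0) {i : Fin m} {δ : ℝ} (hδ0 : 0 ≤ δ)
    (hδ : ∀ j : Fin m, j ≠ i → δ ≤ |1 / tlam j - 1 / lam|) :
    δ ^ 2 * aN A (P u - (u ⬝ᵥ (A *ᵥ tu i)) • tu i) ^ 2 ≤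
      (u - P u) ⬝ᵥ P (A⁻¹ *ᵥ (u - P u)) := by
  have hsymm := hA.posSemidef.isSymm
  have hwK : P u - (u ⬝ᵥ (A *ᵥ tu i)) • tu i ∈ K := K.sub_mem (hPmem u) (K.smul_mem _ (htu i))
  have hw (j : Fin m) : (P u - (u ⬝ᵥ (A *ᵥ tu i)) • tu i) ⬝ᵥ (A *ᵥ tu j) =
      if j = i then 0 else u ⬝ᵥ (A *ᵥ tu j) := by
    rw [sub_dotProduct, hPproj u _ (htu j), smul_dotProduct, htortho]
    rcases eq_or_ne j i with rfl | hj
    · simp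
    · simp [hj, hj.symm]
  have hz (j : Fin m) : P (A⁻¹ *ᵥ (u - P u)) ⬝ᵥ (A *ᵥ tu j) = tu j ⬝ᵥ (u - P u) := by
    rw [hPproj _ _ (htu j), hsymm.dotProduct_mulVec_comm, mulVec_nonsing_inv_mulVec hA.isUnit]
  rw [aN_sq hA.posSemidef, dotProduct_mulVec_self_eq_sum_sq hsymm hK htu htortho hwK,
    ← galerkin_inv_energy_eq hA hPmem hPproj,
    dotProduct_mulVec_self_eq_sum_sq hsymm hK htu htortho (hPmem _), Finset.mul_sum]
  refine Finset.sum_le_sum fun j _ ↦ ?_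
  rw [hw, hz, ritz_dotProduct_sub_galerkin hsymm hPmem hPproj htu hRitz htortho heig hlam]
  split_ifs with hj
  · simp only [ne_eq, OfNat.ofNat_ne_zero, not_false_eq_true, zero_pow, mul_zero]
    positivity
  · have hgap : δ ^ 2 ≤ (1 / lam - 1 / tlam j) ^ 2 := by
      rw [← sq_abs (1 / lam - _), abs_sub_comm]
      exact pow_le_pow_left₀ hδ0 (hδ j hj) 2
    rw [mul_pow]
    exact mul_le_mul_of_nonneg_right hgap (sq_nonneg _)

end SpectralGap

/-- Energy-norm error estimate for the subspace projection method
(first part of Theorem 3.1):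
`‖u − E_m^{(i)} u‖_A ≤ √(1 + (μ̃_1/δ_i²) η_K²) ‖(I − P_K) u‖_A`. -/
theorem stmt3 {n m : ℕ} (A : Matrix (Fin n) (Fin n) ℝ) (hA : A.PosDef)
    -- `K` is an `m`-dimensional subspace of `ℝⁿ`
    (K : Submodule ℝ (Fin n → ℝ)) (hK : Module.finrank ℝ K = m)
    -- `P` is the `A`-orthogonal (Galerkin) projection onto `K`
    (P : (Fin n → ℝ) →ₗ[ℝ] (Fin n → ℝ))
    (hPmem : ∀ x, P x ∈ K)
    (hPproj : ∀ x, ∀ y ∈ K, (P x) ⬝ᵥ (A *ᵥ y) = x ⬝ᵥ (A *ᵥ y))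
    -- the Ritz pairs `(λ̃_j, ũ_j)` of `A` on `K`, with `A`-orthonormal Ritz vectors
    (tlam : Fin m → ℝ) (tu : Fin m → (Fin n → ℝ)) (htmono : Monotone tlam)
    (htu : ∀ j, tu j ∈ K)
    (hRitz : ∀ j, ∀ v ∈ K, ((A *ᵥ tu j) - tlam j • tu j) ⬝ᵥ v = 0)
    (htortho : ∀ i j, tu i ⬝ᵥ (A *ᵥ tu j) = if i = j then (1 : ℝ) else 0)
    -- `(λ, u)` is an exact eigenpair of `A`
    (lam : ℝ) (u : Fin n → ℝ) (hu : u ≠ 0) (heig : A *ᵥ u = lam • u)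
    -- `δ_i > 0` is (a lower bound for) `min_{j ≠ i} |μ̃_j − μ|` where `μ = 1/λ`, `μ̃_j = 1/λ̃_j`
    (i : Fin m) (δ : ℝ) (hδpos : 0 < δ)
    (hδ : ∀ j : Fin m, j ≠ i → δ ≤ |1 / tlam j - 1 / lam|)
    -- `E` is the `A`-orthogonal projection `E_m^{(i)}` onto `span{ũ_i}`
    (E : (Fin n → ℝ) →ₗ[ℝ] (Fin n → ℝ))
    (hEmem : ∀ x, E x ∈ Submodule.span ℝ {tu i})
    (hEproj : ∀ x, ∀ y ∈ Submodule.span ℝ {tu i},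
      (E x) ⬝ᵥ (A *ᵥ y) = x ⬝ᵥ (A *ᵥ y)) :
    aN A (u - E u) ≤
      Real.sqrt (1 + (1 / tlam ⟨0, i.pos⟩) / δ ^ 2 * (etaK A P) ^ 2) *
        aN A (u - P u) := by
  have hsymm := hA.posSemidef.isSymm
  have hlam : lam ≠ 0 := (hA.pos_of_mulVec_eq_smul hu heig).ne'
  have hE : E u = (u ⬝ᵥ (A *ᵥ tu i)) • tu i :=
    apply_eq_dotProduct_mulVec_smul hEmem hEproj (by rw [htortho, if_pos rfl]) u
  have he : ∀ y ∈ K, (u - P u) ⬝ᵥ (A *ᵥ y) = 0 := fun y hy ↦ by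
    rw [sub_dotProduct, hPproj u y hy, sub_self]
  have hpyth : aN A (u - E u) ^ 2 = aN A (u - P u) ^ 2 + aN A (P u - E u) ^ 2 := by
    rw [← aN_add_sq_of_orthogonal hA.posSemidef (he _ (hE ▸ K.sub_mem (hPmem u)
      (K.smul_mem _ (htu i)))), sub_add_sub_cancel]
  have hgap : δ ^ 2 * aN A (P u - E u) ^ 2 ≤ (u - P u) ⬝ᵥ P (A⁻¹ *ᵥ (u - P u)) :=
    hE ▸ sq_mul_aN_sq_le_of_gap hA hK hPmem hPproj htu hRitz htortho heig hlam hδpos.le hδ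
  have hμ : 0 < 1 / tlam ⟨0, i.pos⟩ := one_div_pos.mpr (ritz_pos htu hRitz htortho _)
  have heta : (u - P u) ⬝ᵥ P (A⁻¹ *ᵥ (u - P u)) ≤
      1 / tlam ⟨0, i.pos⟩ * etaK A P ^ 2 * aN A (u - P u) ^ 2 :=
    dotProduct_galerkin_inv_le hA hPmem hPproj hμ.le
      (fun y hy ↦ dotProduct_self_le_of_mem hsymm hK htu hRitz htortho
        (fun j ↦ htmono (Nat.zero_le j)) hy) he
  have hw : aN A (P u - E u) ^ 2 ≤
      1 / tlam ⟨0, i.pos⟩ / δ ^ 2 * etaK A P ^ 2 * aN A (u - P u) ^ 2 := by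
    rw [div_mul_eq_mul_div, div_mul_eq_mul_div, le_div_iff₀ (by positivity)]
    linarith
  rw [← Real.sqrt_sq (aN_nonneg (u - E u)), ← Real.sqrt_sq (aN_nonneg (u - P u)),
    ← Real.sqrt_mul (by positivity)]
  refine Real.sqrt_le_sqrt ?_
  rw [hpyth]
  linarith
end

section
/- Let (λ, u) be an exact eigenpair of A, μ = 1/λ, and let i ∈ {1,…,m} be such that δ_i := min_{j≠i, 1≤j≤m} |μ̃_j − μ| > 0. Let E_m^{(i)} be the A-orthogonal projection onto span{ũ_i}. Then ‖(I − E_m^{(i)}) P_K u‖₂ ≤ (μ̃_1/δ_i) · ‖u − P_K u‖₂. -/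
/-! Expand `P u = ∑ⱼ cⱼ ũⱼ` with `cⱼ = (P u, ũⱼ)_A`. The Galerkin conditions make the Ritz
vectors `L²`-orthogonal with `‖ũⱼ‖₂² = μ̃ⱼ`, and give `(ũⱼ, u - P u) = (μ - μ̃ⱼ) cⱼ`. Hence
`‖(I - E) P u‖₂² = ∑_{j ≠ i} μ̃ⱼ cⱼ²`, and termwise `μ̃ⱼ ≤ μ̃₁² λ̃ⱼ ≤ (μ̃₁/δ)² λ̃ⱼ (μ - μ̃ⱼ)²`,
so Bessel's inequality `∑ⱼ λ̃ⱼ (ũⱼ, u - P u)² ≤ ‖u - P u‖₂²` for the orthogonal family `ũⱼ`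
finishes the proof. -/

open Matrix

open Finset

section

variable {ι κ : Type*} [Fintype ι]

lemma Matrix.PosDef.pos_of_mulVec_eq_smul_s13 {A : Matrix ι ι ℝ} (hA : A.PosDef) {lam : ℝ}
    {u : ι → ℝ} (hu : u ≠ 0) (heig : A *ᵥ u = lam • u) : 0 < lam := by
  have hpos : 0 < lam * (u ⬝ᵥ u) := by
    simpa [heig, dotProduct_smul] using hA.dotProduct_mulVec_pos hu
  exact pos_of_mul_pos_left hpos (by simpa using dotProduct_star_self_nonneg u)

lemma l2N_le_mul_l2N {n : ℕ} {C : ℝ} {x y : Fin n → ℝ} (hC : 0 ≤ C)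
    (h : x ⬝ᵥ x ≤ C ^ 2 * (y ⬝ᵥ y)) : l2N x ≤ C * l2N y := by
  rw [l2N, l2N, ← Real.sqrt_sq hC, ← Real.sqrt_mul (sq_nonneg C)]
  exact Real.sqrt_le_sqrt h

section Orthogonal

variable {v : κ → ι → ℝ}

lemma dotProduct_self_sum_smul (hv : Pairwise fun j k => v j ⬝ᵥ v k = 0) (s : Finset κ)
    (a : κ → ℝ) :
    (∑ j ∈ s, a j • v j) ⬝ᵥ (∑ j ∈ s, a j • v j) = ∑ j ∈ s, a j ^ 2 * (v j ⬝ᵥ v j) := by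
  classical
  simp only [sum_dotProduct, dotProduct_sum, smul_dotProduct, dotProduct_smul, smul_eq_mul]
  refine sum_congr rfl fun j hj => ?_
  rw [sum_eq_single_of_mem j hj fun k _ hkj => by simp [hv hkj]]
  ring

lemma sum_sq_dotProduct_div_le (hv : Pairwise fun j k => v j ⬝ᵥ v k = 0)
    (hpos : ∀ j, 0 < v j ⬝ᵥ v j) (s : Finset κ) (w : ι → ℝ) :
    ∑ j ∈ s, (v j ⬝ᵥ w) ^ 2 / (v j ⬝ᵥ v j) ≤ w ⬝ᵥ w := by
  set S := ∑ j ∈ s, (v j ⬝ᵥ w) ^ 2 / (v j ⬝ᵥ v j)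
  -- `p` is the orthogonal projection of `w` onto the span of the `v j`; use `0 ≤ ‖w - p‖₂²`.
  set p := ∑ j ∈ s, ((v j ⬝ᵥ w) / (v j ⬝ᵥ v j)) • v j
  have hpw : p ⬝ᵥ w = S := by
    simp only [p, S, sum_dotProduct, smul_dotProduct, smul_eq_mul]
    exact sum_congr rfl fun j _ => by ring
  have hpp : p ⬝ᵥ p = S := by
    rw [dotProduct_self_sum_smul hv]
    exact sum_congr rfl fun j _ => by field_simp [(hpos j).ne']
  have h := dotProduct_star_self_nonneg (w - p)
  simp only [star_trivial, sub_dotProduct, dotProduct_sub, dotProduct_comm w p, hpw, hpp] at h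
  linarith

lemma dotProduct_self_sum_smul_le (hv : Pairwise fun j k => v j ⬝ᵥ v k = 0)
    (hpos : ∀ j, 0 < v j ⬝ᵥ v j) {s : Finset κ} {a : κ → ℝ} {w : ι → ℝ} {C : ℝ}
    (h : ∀ j ∈ s, a j ^ 2 * (v j ⬝ᵥ v j) ≤ C ^ 2 * ((v j ⬝ᵥ w) ^ 2 / (v j ⬝ᵥ v j))) :
    (∑ j ∈ s, a j • v j) ⬝ᵥ (∑ j ∈ s, a j • v j) ≤ C ^ 2 * (w ⬝ᵥ w) :=
  calc (∑ j ∈ s, a j • v j) ⬝ᵥ (∑ j ∈ s, a j • v j) = ∑ j ∈ s, a j ^ 2 * (v j ⬝ᵥ v j) :=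
        dotProduct_self_sum_smul hv s a
    _ ≤ C ^ 2 * ∑ j ∈ s, (v j ⬝ᵥ w) ^ 2 / (v j ⬝ᵥ v j) := by
        rw [mul_sum]
        exact sum_le_sum h
    _ ≤ C ^ 2 * (w ⬝ᵥ w) := by
        gcongr
        exact sum_sq_dotProduct_div_le hv hpos s w

end Orthogonal

section Galerkin

variable {A : Matrix ι ι ℝ} {K : Submodule ℝ (ι → ℝ)}

lemma mul_dotProduct_eq_of_ritz {t : ℝ} {x : ι → ℝ}
    (hx : ∀ v ∈ K, ((A *ᵥ x) - t • x) ⬝ᵥ v = 0) {v : ι → ℝ} (hv : v ∈ K) :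
    t * (x ⬝ᵥ v) = v ⬝ᵥ (A *ᵥ x) := by
  have h := hx v hv
  rwa [sub_dotProduct, smul_dotProduct, smul_eq_mul, sub_eq_zero, dotProduct_comm,
    eq_comm] at h

lemma ritz_dotProduct_sub_eq (hA : A.IsSymm) {lam : ℝ} {u : ι → ℝ} (heig : A *ᵥ u = lam • u)
    (hlam : lam ≠ 0) {t : ℝ} {x : ι → ℝ} (hRitz : ∀ v ∈ K, ((A *ᵥ x) - t • x) ⬝ᵥ v = 0)
    (ht : t ≠ 0) {p : ι → ℝ} (hp : p ∈ K) (hpx : p ⬝ᵥ (A *ᵥ x) = u ⬝ᵥ (A *ᵥ x)) :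
    x ⬝ᵥ (u - p) = (lam⁻¹ - t⁻¹) * (p ⬝ᵥ (A *ᵥ x)) := by
  have hu : lam * (x ⬝ᵥ u) = p ⬝ᵥ (A *ᵥ x) := by
    rw [hpx, dotProduct_mulVec, ← mulVec_transpose, hA.eq, heig, smul_dotProduct,
      smul_eq_mul, dotProduct_comm]
  have hxu : x ⬝ᵥ u = lam⁻¹ * (p ⬝ᵥ (A *ᵥ x)) := by rw [← hu, inv_mul_cancel_left₀ hlam]
  have hxp : x ⬝ᵥ p = t⁻¹ * (p ⬝ᵥ (A *ᵥ x)) := by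
    rw [← mul_dotProduct_eq_of_ritz hRitz hp, inv_mul_cancel_left₀ ht]
  rw [dotProduct_sub, hxu, hxp, sub_mul]

variable [DecidableEq κ] {tlam : κ → ℝ} {tu : κ → ι → ℝ}

lemma ritz_mul_dotProduct_ritz (htu : ∀ j, tu j ∈ K)
    (hRitz : ∀ j, ∀ v ∈ K, ((A *ᵥ tu j) - tlam j • tu j) ⬝ᵥ v = 0)
    (hortho : ∀ j k, tu j ⬝ᵥ (A *ᵥ tu k) = if j = k then 1 else 0) (j k : κ) :
    tlam j * (tu j ⬝ᵥ tu k) = if k = j then 1 else 0 := by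
  rw [mul_dotProduct_eq_of_ritz (hRitz j) (htu k), hortho]

lemma ritz_value_pos (htu : ∀ j, tu j ∈ K)
    (hRitz : ∀ j, ∀ v ∈ K, ((A *ᵥ tu j) - tlam j • tu j) ⬝ᵥ v = 0)
    (hortho : ∀ j k, tu j ⬝ᵥ (A *ᵥ tu k) = if j = k then 1 else 0) (j : κ) :
    0 < tlam j := by
  have h := ritz_mul_dotProduct_ritz htu hRitz hortho j j
  rw [if_pos rfl] at h
  exact pos_of_mul_pos_left (h ▸ one_pos) (by simpa using dotProduct_star_self_nonneg (tu j))

lemma ritz_dotProduct_self (htu : ∀ j, tu j ∈ K)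
    (hRitz : ∀ j, ∀ v ∈ K, ((A *ᵥ tu j) - tlam j • tu j) ⬝ᵥ v = 0)
    (hortho : ∀ j k, tu j ⬝ᵥ (A *ᵥ tu k) = if j = k then 1 else 0) (j : κ) :
    tu j ⬝ᵥ tu j = (tlam j)⁻¹ := by
  have h := ritz_mul_dotProduct_ritz htu hRitz hortho j j
  rw [if_pos rfl] at h
  exact eq_inv_of_mul_eq_one_right h

lemma ritz_pairwise_dotProduct_eq_zero (htu : ∀ j, tu j ∈ K)
    (hRitz : ∀ j, ∀ v ∈ K, ((A *ᵥ tu j) - tlam j • tu j) ⬝ᵥ v = 0)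
    (hortho : ∀ j k, tu j ⬝ᵥ (A *ᵥ tu k) = if j = k then 1 else 0) :
    Pairwise fun j k => tu j ⬝ᵥ tu k = 0 := fun j k hjk => by
  have h := ritz_mul_dotProduct_ritz htu hRitz hortho j k
  rw [if_neg (Ne.symm hjk)] at h
  exact (mul_eq_zero.1 h).resolve_left (ritz_value_pos htu hRitz hortho j).ne'

end Galerkin

section AOrthonormal

variable [Fintype κ] [DecidableEq κ] {A : Matrix ι ι ℝ} {tu : κ → ι → ℝ}

lemma sum_smul_dotProduct_mulVec
    (hortho : ∀ j k, tu j ⬝ᵥ (A *ᵥ tu k) = if j = k then 1 else 0) (a : κ → ℝ) (k : κ) :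
    (∑ j, a j • tu j) ⬝ᵥ (A *ᵥ tu k) = a k := by
  simp [sum_dotProduct, smul_dotProduct, hortho]

lemma linearIndependent_of_dotProduct_mulVec
    (hortho : ∀ j k, tu j ⬝ᵥ (A *ᵥ tu k) = if j = k then 1 else 0) :
    LinearIndependent ℝ tu := by
  refine Fintype.linearIndependent_iff.2 fun a ha k => ?_
  rw [← sum_smul_dotProduct_mulVec hortho a k, ha, zero_dotProduct]

lemma eq_sum_smul_of_mem {K : Submodule ℝ (ι → ℝ)} (hK : Module.finrank ℝ K = Fintype.card κ)
    (htu : ∀ j, tu j ∈ K) (hortho : ∀ j k, tu j ⬝ᵥ (A *ᵥ tu k) = if j = k then 1 else 0)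
    {x : ι → ℝ} (hx : x ∈ K) : x = ∑ j, (x ⬝ᵥ (A *ᵥ tu j)) • tu j := by
  have hspan : Submodule.span ℝ (Set.range tu) = K := by
    refine Submodule.eq_of_le_of_finrank_le (Submodule.span_le.2 ?_) ?_
    · rintro _ ⟨j, rfl⟩
      exact htu j
    · rw [hK, finrank_span_eq_card (linearIndependent_of_dotProduct_mulVec hortho)]
  obtain ⟨a, rfl⟩ := (Submodule.mem_span_range_iff_exists_fun ℝ).1 (hspan ▸ hx)
  simp only [sum_smul_dotProduct_mulVec hortho]

lemma sub_smul_eq_sum_erase {K : Submodule ℝ (ι → ℝ)}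
    (hK : Module.finrank ℝ K = Fintype.card κ) (htu : ∀ j, tu j ∈ K)
    (hortho : ∀ j k, tu j ⬝ᵥ (A *ᵥ tu k) = if j = k then 1 else 0) {x : ι → ℝ} (hx : x ∈ K)
    (i : κ) :
    x - (x ⬝ᵥ (A *ᵥ tu i)) • tu i = ∑ j ∈ univ.erase i, (x ⬝ᵥ (A *ᵥ tu j)) • tu j :=
  sub_eq_of_eq_add' ((eq_sum_smul_of_mem hK htu hortho hx).trans
    (add_sum_erase _ _ (mem_univ i)).symm)

end AOrthonormal

lemma eq_smul_of_mem_span_singleton {A : Matrix ι ι ℝ} {v p x : ι → ℝ}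
    (hv : v ⬝ᵥ (A *ᵥ v) = 1) (hp : p ∈ Submodule.span ℝ {v})
    (hpx : p ⬝ᵥ (A *ᵥ v) = x ⬝ᵥ (A *ᵥ v)) : p = (x ⬝ᵥ (A *ᵥ v)) • v := by
  obtain ⟨t, rfl⟩ := Submodule.mem_span_singleton.1 hp
  rw [← hpx, smul_dotProduct, hv, smul_eq_mul, mul_one]

lemma sq_mul_le_of_le_abs_sub {μ₁ μ' μ δ c : ℝ} (hμ' : 0 < μ') (hμ'₁ : μ' ≤ μ₁) (hδ : 0 < δ)
    (hgap : δ ≤ |μ' - μ|) : c ^ 2 * μ' ≤ (μ₁ / δ) ^ 2 * (((μ - μ') * c) ^ 2 / μ') := by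
  have hsq : δ ^ 2 ≤ (μ - μ') ^ 2 := by
    rw [← sq_abs (μ - μ'), abs_sub_comm]
    exact pow_le_pow_left₀ hδ.le hgap 2
  calc c ^ 2 * μ' = μ' ^ 2 * c ^ 2 / μ' := by field_simp
    _ ≤ μ₁ ^ 2 * c ^ 2 / μ' := by gcongr
    _ = (μ₁ / δ) ^ 2 * (δ ^ 2 * c ^ 2 / μ') := by field_simp
    _ ≤ (μ₁ / δ) ^ 2 * (((μ - μ') * c) ^ 2 / μ') := by
        rw [mul_pow]
        gcongr

end

/-- The estimate (3.19): `‖(I − E_m^{(i)}) P_K u‖₂ ≤ (μ̃_1/δ_i) ‖u − P_K u‖₂`. -/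
theorem stmt13 {n m : ℕ} (A : Matrix (Fin n) (Fin n) ℝ) (hA : A.PosDef)
    -- `K` is an `m`-dimensional subspace of `ℝⁿ`
    (K : Submodule ℝ (Fin n → ℝ)) (hK : Module.finrank ℝ K = m)
    -- `P` is the `A`-orthogonal (Galerkin) projection onto `K`
    (P : (Fin n → ℝ) →ₗ[ℝ] (Fin n → ℝ))
    (hPmem : ∀ x, P x ∈ K)
    (hPproj : ∀ x, ∀ y ∈ K, (P x) ⬝ᵥ (A *ᵥ y) = x ⬝ᵥ (A *ᵥ y))
    -- the Ritz pairs `(λ̃_j, ũ_j)` of `A` on `K`, with `A`-orthonormal Ritz vectors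
    (tlam : Fin m → ℝ) (tu : Fin m → (Fin n → ℝ)) (htmono : Monotone tlam)
    (htu : ∀ j, tu j ∈ K)
    (hRitz : ∀ j, ∀ v ∈ K, ((A *ᵥ tu j) - tlam j • tu j) ⬝ᵥ v = 0)
    (htortho : ∀ i j, tu i ⬝ᵥ (A *ᵥ tu j) = if i = j then (1 : ℝ) else 0)
    -- `(λ, u)` is an exact eigenpair of `A`
    (lam : ℝ) (u : Fin n → ℝ) (hu : u ≠ 0) (heig : A *ᵥ u = lam • u)
    -- `δ_i > 0` is (a lower bound for) `min_{j ≠ i} |μ̃_j − μ|` where `μ = 1/λ`, `μ̃_j = 1/λ̃_j`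
    (i : Fin m) (δ : ℝ) (hδpos : 0 < δ)
    (hδ : ∀ j : Fin m, j ≠ i → δ ≤ |1 / tlam j - 1 / lam|)
    -- `E` is the `A`-orthogonal projection `E_m^{(i)}` onto `span{ũ_i}`
    (E : (Fin n → ℝ) →ₗ[ℝ] (Fin n → ℝ))
    (hEmem : ∀ x, E x ∈ Submodule.span ℝ {tu i})
    (hEproj : ∀ x, ∀ y ∈ Submodule.span ℝ {tu i},
      (E x) ⬝ᵥ (A *ᵥ y) = x ⬝ᵥ (A *ᵥ y)) :
    l2N (P u - E (P u)) ≤ (1 / tlam ⟨0, i.pos⟩) / δ * l2N (u - P u) := by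
  simp only [one_div] at hδ ⊢
  have hlam : lam ≠ 0 := (hA.pos_of_mulVec_eq_smul_s13 hu heig).ne'
  have htpos := ritz_value_pos htu hRitz htortho
  have hself := ritz_dotProduct_self htu hRitz htortho
  have hEPu : E (P u) = (P u ⬝ᵥ (A *ᵥ tu i)) • tu i :=
    eq_smul_of_mem_span_singleton (by simp [htortho]) (hEmem _)
      (hEproj _ _ (Submodule.mem_span_singleton_self _))
  rw [hEPu, sub_smul_eq_sum_erase (by rw [hK, Fintype.card_fin]) htu htortho (hPmem u) i]
  refine l2N_le_mul_l2N (div_nonneg (inv_nonneg.2 (htpos _).le) hδpos.le)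
    (dotProduct_self_sum_smul_le (ritz_pairwise_dotProduct_eq_zero htu hRitz htortho)
      (fun j => hself j ▸ inv_pos.2 (htpos j)) fun j hj => ?_)
  rw [hself, ritz_dotProduct_sub_eq (isHermitian_iff_isSymm.1 hA.isHermitian) heig hlam
    (hRitz j) (htpos j).ne' (hPmem u) (hPproj u _ (htu j))]
  exact sq_mul_le_of_le_abs_sub (inv_pos.2 (htpos j))
    (inv_anti₀ (htpos _) (htmono (show (⟨0, i.pos⟩ : Fin m) ≤ j from Nat.zero_le _)))
    hδpos (hδ j (ne_of_mem_erase hj))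
end
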